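/- arXiv:2311.14215 — 6 statements merged into one kernel-verified Lean document; each statement's English description precedes it below -/
import Mathlib

section
/- The Sasaki conjunction distributes over arbitrary joins in its right argument: for a closed subspace A and a family (B_i) of closed subspaces of a finite-dimensional Hilbert space, A ⩀ (⨆ i, B_i) = ⨆ i, (A ⩀ B_i). -/
open Submodule in
lemma sasaki_eq_map
    {H : Type*} [NormedAddCommGroup H] [InnerProductSpace ℂ H] [FiniteDimensional ℂ H]
    (A B : Submodule ℂ H) :
    A ⊓ (Aᗮ ⊔ B) = B.map (A.subtype ∘ₗ (orthogonalProjection A).toLinearMap) := by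
  ext x
  simp only [Submodule.mem_map, Submodule.mem_inf, LinearMap.comp_apply,
    ContinuousLinearMap.coe_coe, Submodule.subtype_apply]
  constructor
  · rintro ⟨hxA, hx⟩
    rw [sup_comm, Submodule.mem_sup] at hx
    obtain ⟨b, hb, y, hy, rfl⟩ := hx
    refine ⟨b, hb, ?_⟩
    have h1 : (orthogonalProjection A (b + y) : H) = b + y :=
      Submodule.starProjection_eq_self_iff.2 hxA
    have h2 : orthogonalProjection A y = 0 :=
      orthogonalProjection_mem_subspace_orthogonalComplement_eq_zero hy
    have := map_add (orthogonalProjection A) b y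
    rw [h2, add_zero] at this
    rw [← this, h1]
  · rintro ⟨b, hb, rfl⟩
    refine ⟨(orthogonalProjection A b).2, ?_⟩
    have : (orthogonalProjection A b : H) = b - (b - orthogonalProjection A b) := by abel
    rw [this]
    exact Submodule.sub_mem _ (Submodule.mem_sup_right hb)
      (Submodule.mem_sup_left (Submodule.sub_starProjection_mem_orthogonal b))

theorem sasaki_conj_iSup
    {H : Type*} [NormedAddCommGroup H] [InnerProductSpace ℂ H] [FiniteDimensional ℂ H]
    {ι : Type*} (A : Submodule ℂ H) (B : ι → Submodule ℂ H) :
    A ⊓ (Aᗮ ⊔ ⨆ i, B i) = ⨆ i, A ⊓ (Aᗮ ⊔ B i) := by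
  simp only [sasaki_eq_map, Submodule.map_iSup]
end

section
/- For subspaces A, B of a finite-dimensional Hilbert space, the following are equivalent: Aᗮ ⊆ B; Bᗮ ⊆ A; and A ⇝ B = B. -/
theorem sasaki_imply_eq_self_iff
    {H : Type*} [NormedAddCommGroup H] [InnerProductSpace ℂ H] [FiniteDimensional ℂ H]
    (A B : Submodule ℂ H) :
    (Aᗮ ≤ B ↔ Bᗮ ≤ A) ∧ (Aᗮ ≤ B ↔ Aᗮ ⊔ (A ⊓ B) = B) := by
  constructor
  · constructor
    · intro h
      calc Bᗮ ≤ Aᗮᗮ := Submodule.orthogonal_le h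
        _ = A := Submodule.orthogonal_orthogonal A
    · intro h
      exact (Submodule.orthogonal_le h).trans_eq (Submodule.orthogonal_orthogonal B)
  · constructor
    · intro h
      have := Submodule.sup_orthogonal_inf_of_hasOrthogonalProjection h
      rwa [Submodule.orthogonal_orthogonal A] at this
    · intro h
      rw [← h]
      exact le_sup_left
end

section
/- For subspaces A, B, C of a finite-dimensional Hilbert space, B ⇝ (A ⇝ ((A ⇝ B) ⇝ C)) = A ⇝ ((A ⇝ B) ⇝ C). -/
noncomputable def sasakiImply {H : Type*} [NormedAddCommGroup H] [InnerProductSpace ℂ H]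
    (A B : Submodule ℂ H) : Submodule ℂ H := Aᗮ ⊔ (A ⊓ B)

theorem sasaki_imply_absorb
    {H : Type*} [NormedAddCommGroup H] [InnerProductSpace ℂ H] [FiniteDimensional ℂ H]
    (A B C : Submodule ℂ H) :
    sasakiImply B (sasakiImply A (sasakiImply (sasakiImply A B) C))
      = sasakiImply A (sasakiImply (sasakiImply A B) C) := by
  obtain ⟨Y, hY⟩ : ∃ Y, Y = sasakiImply (sasakiImply A B) C := ⟨_, rfl⟩
  obtain ⟨X, hX⟩ : ∃ X, X = sasakiImply A Y := ⟨_, rfl⟩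
  rw [← hY, ← hX]
  -- A ⊓ (Aᗮ ⊔ Bᗮ) ≤ (A ⇝ B)ᗮ
  have h1 : A ⊓ (Aᗮ ⊔ Bᗮ) ≤ (sasakiImply A B)ᗮ := by
    rw [sasakiImply, ← Submodule.inf_orthogonal, Submodule.orthogonal_orthogonal]
    exact inf_le_inf_left A (sup_le (Submodule.orthogonal_le inf_le_left)
      (Submodule.orthogonal_le inf_le_right))
  -- hence A ⊓ (Aᗮ ⊔ Bᗮ) ≤ Y
  have h2 : A ⊓ (Aᗮ ⊔ Bᗮ) ≤ Y := by
    rw [hY, sasakiImply]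
    exact le_trans h1 le_sup_left
  -- orthomodularity: Aᗮ ⊔ (A ⊓ (Aᗮ ⊔ Bᗮ)) = Aᗮ ⊔ Bᗮ
  have h3 : Aᗮ ⊔ Aᗮᗮ ⊓ (Aᗮ ⊔ Bᗮ) = Aᗮ ⊔ Bᗮ :=
    Submodule.sup_orthogonal_inf_of_hasOrthogonalProjection le_sup_left
  rw [Submodule.orthogonal_orthogonal] at h3
  -- Bᗮ ≤ X
  have h4 : Bᗮ ≤ X := by
    rw [hX, sasakiImply]
    calc Bᗮ ≤ Aᗮ ⊔ Bᗮ := le_sup_right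
    _ = Aᗮ ⊔ A ⊓ (Aᗮ ⊔ Bᗮ) := h3.symm
    _ ≤ Aᗮ ⊔ A ⊓ Y := sup_le le_sup_left (le_trans (le_inf inf_le_left h2) le_sup_right)
  -- orthomodularity with Bᗮ ≤ X
  have h5 : Bᗮ ⊔ Bᗮᗮ ⊓ X = X := Submodule.sup_orthogonal_inf_of_hasOrthogonalProjection h4
  rw [Submodule.orthogonal_orthogonal] at h5
  rw [sasakiImply, h5]
end

section
/- Let P be an orthogonal projection on a finite-dimensional Hilbert space with range the subspace A, and let R be a subspace with orthogonal projection P_R. Then for a unit vector η, we have ⟨η, P P_Rᗮ P η⟩ = 0 if and only if η belongs to Aᗮ ⊔ (A ⊓ R) (the Sasaki implication A ⇝ R). -/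
/-- The orthogonal projection onto `S`, as a continuous linear map `H →L[ℂ] H`. -/
noncomputable def projCLM {H : Type*} [NormedAddCommGroup H] [InnerProductSpace ℂ H]
    [FiniteDimensional ℂ H] (S : Submodule ℂ H) : H →L[ℂ] H :=
  S.subtypeL.comp (S.orthogonalProjectionOnto)

lemma projCLM_apply {H : Type*} [NormedAddCommGroup H] [InnerProductSpace ℂ H]
    [FiniteDimensional ℂ H] (S : Submodule ℂ H) (x : H) :
    projCLM S x = (S.orthogonalProjectionOnto x : H) := rfl

theorem inner_proj_compl_proj_eq_zero_iff_sasaki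
    {H : Type*} [NormedAddCommGroup H] [InnerProductSpace ℂ H] [FiniteDimensional ℂ H]
    (A R : Submodule ℂ H) (η : H) (hη : ‖η‖ = 1) :
    @inner ℂ H _ η (projCLM A (projCLM Rᗮ (projCLM A η))) = 0 ↔ η ∈ Aᗮ ⊔ (A ⊓ R) := by
  set u : H := projCLM A η with hu
  set w : H := projCLM Rᗮ u with hw
  have h1 : @inner ℂ H _ η (projCLM A w) = @inner ℂ H _ u w := by
    rw [projCLM_apply, hu, projCLM_apply, ← Submodule.starProjection_apply, ← Submodule.starProjection_apply,
      ← Submodule.inner_starProjection_left_eq_right]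
  have h2 : @inner ℂ H _ u w = @inner ℂ H _ w w := by
    have h3 : @inner ℂ H _ (u - w) w = 0 := by
      rw [hw, projCLM_apply]
      exact Submodule.starProjection_inner_eq_zero u _ (Subtype.coe_prop _)
    rw [inner_sub_left, sub_eq_zero] at h3
    exact h3
  rw [h1, h2, inner_self_eq_zero]
  constructor
  · intro h0
    have huR : u ∈ R := by
      have hz : Rᗮ.orthogonalProjectionOnto u = 0 := by
        ext1
        rw [← projCLM_apply, ← hw, h0]; rfl
      have := Submodule.orthogonalProjectionOnto_eq_zero_iff.mp hz
      rwa [R.orthogonal_orthogonal] at this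
    have huA : u ∈ A := by rw [hu, projCLM_apply]; exact Subtype.coe_prop _
    have hdiff : η - u ∈ Aᗮ := by
      rw [hu, projCLM_apply]; exact Submodule.sub_starProjection_mem_orthogonal η
    have hsplit : η = (η - u) + u := (sub_add_cancel η u).symm
    rw [hsplit]
    exact Submodule.add_mem_sup hdiff (Submodule.mem_inf.mpr ⟨huA, huR⟩)
  · intro h
    obtain ⟨a, ha, b, hb, rfl⟩ := Submodule.mem_sup.mp h
    obtain ⟨hbA, hbR⟩ := Submodule.mem_inf.mp hb
    have hub : u = b := by
      rw [hu, projCLM_apply, map_add,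
        Submodule.orthogonalProjectionOnto_apply_of_mem_orthogonal ha,
        zero_add, ← Submodule.starProjection_apply, Submodule.starProjection_eq_self_iff.mpr hbA]
    rw [hw, hub, projCLM_apply,
      Submodule.orthogonalProjectionOnto_apply_of_mem_orthogonal
        (R.le_orthogonal_orthogonal hbR)]
    rfl
end

section
/- The support of P ρ P, where P is the orthogonal projection onto subspace A and ρ is a positive semidefinite operator with support (range) R, equals the Sasaki conjunction A ⩀ R = A ⊓ (Aᗮ ⊔ R). -/
open ContinuousLinearMap RCLike
local notation "⟪" x ", " y "⟫_ℂ" => @inner ℂ _ _ x y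

section Aux
open ContinuousLinearMap RCLike

variable {H : Type*} [NormedAddCommGroup H] [InnerProductSpace ℂ H] [FiniteDimensional ℂ H]

/-- For a positive operator, `⟪ρ y, y⟫ = 0` implies `ρ y = 0`. -/
lemma aux_pos_inner_zero (ρ : H →L[ℂ] H) (hρ : ρ.IsPositive) {y : H}
    (h : ⟪ρ y, y⟫_ℂ = 0) : ρ y = 0 := by
  set z := ρ y with hz
  by_contra hne
  have hsym : (ρ : H →ₗ[ℂ] H).IsSymmetric := hρ.isSelfAdjoint.isSymmetric
  have hn : (0:ℝ) < ‖z‖ ^ 2 := by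
    have := norm_pos_iff.2 hne
    positivity
  set a := re ⟪ρ z, z⟫_ℂ with ha
  have ha0 : 0 ≤ a := hρ.re_inner_nonneg_left z
  set s : ℝ := ‖z‖ ^ 2 / (a + 1) with hs
  have hs0 : 0 < s := by positivity
  have key : 0 ≤ re ⟪ρ (y - (s:ℂ) • z), y - (s:ℂ) • z⟫_ℂ := hρ.re_inner_nonneg_left _
  have e1 : ⟪z, z⟫_ℂ = (‖z‖:ℂ) ^ 2 := by
    rw [inner_self_eq_norm_sq_to_K]; norm_num
  have e2 : ⟪ρ z, y⟫_ℂ = (‖z‖:ℂ) ^ 2 := by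
    have h2 := hsym z y
    simp only [ContinuousLinearMap.coe_coe] at h2
    rw [h2, ← hz, e1]
  have expand : ⟪ρ (y - (s:ℂ) • z), y - (s:ℂ) • z⟫_ℂ
      = ((-2*s*‖z‖^2 : ℝ):ℂ) + ((s^2 : ℝ):ℂ) * ⟪ρ z, z⟫_ℂ := by
    simp only [map_sub, map_smul, inner_sub_left, inner_sub_right, inner_smul_left,
      inner_smul_right, Complex.conj_ofReal]
    rw [← hz, h, e1, e2]
    push_cast
    ring
  rw [expand] at key
  have hre : re (((-2*s*‖z‖^2 : ℝ):ℂ) + ((s^2 : ℝ):ℂ) * ⟪ρ z, z⟫_ℂ)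
      = -2*s*‖z‖^2 + s^2 * a := by
    rw [ha]
    simp [Complex.add_re, Complex.mul_re, Complex.ofReal_re, Complex.ofReal_im, ← Complex.ofReal_pow]
  rw [hre] at key
  have h1 : s * (a + 1) = ‖z‖ ^ 2 := by
    rw [hs]; field_simp
  nlinarith [mul_pos hs0 hn, mul_nonneg hs0.le ha0, sq_nonneg s]

/-- For a self-adjoint operator on a finite-dimensional space, `(ker T)ᗮ = range T`. -/
lemma aux_orthogonal_ker (T : H →L[ℂ] H) (hT : IsSelfAdjoint T) :
    (LinearMap.ker (T : H →ₗ[ℂ] H))ᗮ = LinearMap.range (T : H →ₗ[ℂ] H) := by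
  have hsym : (T : H →ₗ[ℂ] H).IsSymmetric := hT.isSymmetric
  have hle : LinearMap.range (T : H →ₗ[ℂ] H) ≤ (LinearMap.ker (T : H →ₗ[ℂ] H))ᗮ := by
    rintro _ ⟨x, rfl⟩
    rw [Submodule.mem_orthogonal]
    intro v hv
    have h2 := hsym v x
    simp only [ContinuousLinearMap.coe_coe] at h2
    rw [ContinuousLinearMap.coe_coe, ← h2, (id (LinearMap.mem_ker.mp hv) : T v = 0), inner_zero_left]
  have h1 : Module.finrank ℂ (LinearMap.ker (T : H →ₗ[ℂ] H)) + Module.finrank ℂ (LinearMap.ker (T : H →ₗ[ℂ] H))ᗮ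
      = Module.finrank ℂ H := Submodule.finrank_add_finrank_orthogonal _
  have h2 : Module.finrank ℂ (LinearMap.range (T : H →ₗ[ℂ] H)) + Module.finrank ℂ (LinearMap.ker (T : H →ₗ[ℂ] H))
      = Module.finrank ℂ H := LinearMap.finrank_range_add_finrank_ker (T : H →ₗ[ℂ] H)
  exact (Submodule.eq_of_le_of_finrank_eq hle (by omega)).symm

lemma aux_orthogonal_inf (S T : Submodule ℂ H) : (S ⊓ T)ᗮ = Sᗮ ⊔ Tᗮ := by
  rw [← Submodule.orthogonal_orthogonal S, ← Submodule.orthogonal_orthogonal T,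
    Submodule.inf_orthogonal, Submodule.orthogonal_orthogonal, Submodule.orthogonal_orthogonal,
    Submodule.orthogonal_orthogonal]

end Aux

theorem range_proj_pos_proj_eq_sasaki
    {H : Type*} [NormedAddCommGroup H] [InnerProductSpace ℂ H] [FiniteDimensional ℂ H]
    (A : Submodule ℂ H) (ρ : H →L[ℂ] H) (hρ : ρ.IsPositive) :
    LinearMap.range (((projCLM A).comp (ρ.comp (projCLM A)) : H →L[ℂ] H) : H →ₗ[ℂ] H)
      = A ⊓ (Aᗮ ⊔ LinearMap.range (ρ : H →ₗ[ℂ] H)) := by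
  set P := projCLM A with hP
  set T := P.comp (ρ.comp P) with hTdef
  have hTpos : T.IsPositive := by
    have h := hρ.conj_starProjection A
    exact h
  have hPapp : ∀ x : H, P x = (A.orthogonalProjectionOnto x : H) := fun x => rfl
  have hker : LinearMap.ker (T : H →ₗ[ℂ] H) = Aᗮ ⊔ (A ⊓ LinearMap.ker (ρ : H →ₗ[ℂ] H)) := by
    ext x
    simp only [LinearMap.mem_ker]
    constructor
    · intro hx
      have hρPx : ρ (P x) = 0 := by
        apply aux_pos_inner_zero ρ hρ
        have hPsa : IsSelfAdjoint P := isSelfAdjoint_starProjection A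
        have h1 : (inner ℂ (P (ρ (P x))) x : ℂ) = inner ℂ (ρ (P x)) (P x) := by
          have := hPsa.isSymmetric (ρ (P x)) x
          simp only [ContinuousLinearMap.coe_coe] at this
          rw [this]
        have h2 : P (ρ (P x)) = 0 := hx
        rw [← h1, h2, inner_zero_left]
      have hmem1 : x - P x ∈ Aᗮ := by
        rw [hPapp]
        exact Submodule.sub_starProjection_mem_orthogonal (K := A) x
      have hmem2 : P x ∈ A ⊓ LinearMap.ker (ρ : H →ₗ[ℂ] H) := by
        refine ⟨?_, LinearMap.mem_ker.mpr hρPx⟩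
        rw [hPapp]
        exact SetLike.coe_mem _
      have := Submodule.add_mem_sup hmem1 hmem2
      simpa using this
    · intro hx
      rw [Submodule.mem_sup] at hx
      obtain ⟨u, hu, v, hv, rfl⟩ := hx
      have hPu : P u = 0 := by
        rw [hPapp, Submodule.orthogonalProjectionOnto_apply_of_mem_orthogonal hu,
          Submodule.coe_zero]
      have hPv : P v = v := by
        rw [hPapp]
        exact Submodule.starProjection_eq_self_iff (K := A).mpr hv.1
      show P (ρ (P (u + v))) = 0
      rw [map_add, hPu, hPv, zero_add, (id (LinearMap.mem_ker.mp hv.2) : ρ v = 0), map_zero]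
  have hrange : LinearMap.range (T : H →ₗ[ℂ] H) = (LinearMap.ker (T : H →ₗ[ℂ] H))ᗮ :=
    (aux_orthogonal_ker T hTpos.isSelfAdjoint).symm
  rw [hrange, hker, ← Submodule.inf_orthogonal, Submodule.orthogonal_orthogonal,
    aux_orthogonal_inf, aux_orthogonal_ker ρ hρ.isSelfAdjoint]
end

section
/- For a completely positive map ℰ (or any linear map of the form ρ ↦ Σ_k K_k ρ K_k†) and positive semidefinite operators, the support of ℰ applied to the projection onto supp(ρ) spans the same subspace as the support of ℰ(ρ): supp(ℰ(P_{supp ρ})) = supp(ℰ(ρ)). -/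
/-- The map given by Kraus operators `K`: `X ↦ Σ k, K k ∘ X ∘ (K k)†`. -/
noncomputable def krausMap {H : Type*} [NormedAddCommGroup H] [InnerProductSpace ℂ H]
    [FiniteDimensional ℂ H] {ι : Type*} [Fintype ι] (K : ι → (H →L[ℂ] H))
    (X : H →L[ℂ] H) : H →L[ℂ] H :=
  ∑ k, (K k).comp (X.comp (ContinuousLinearMap.adjoint (K k)))

section Aux

open ContinuousLinearMap RCLike
open scoped InnerProductSpace

variable {H : Type*} [NormedAddCommGroup H] [InnerProductSpace ℂ H] [FiniteDimensional ℂ H]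

private lemma pos_apply_eq_zero {T : H →L[ℂ] H} (hT : T.IsPositive) {x : H}
    (hx : re ⟪T x, x⟫_ℂ = 0) : T x = 0 := by
  have hsymm : (T : H →ₗ[ℂ] H).IsSymmetric :=
    ContinuousLinearMap.isSelfAdjoint_iff_isSymmetric.mp hT.isSelfAdjoint
  set a : ℝ := ‖T x‖ ^ 2 with ha
  set b : ℝ := re ⟪T (T x), T x⟫_ℂ with hb
  have hbnn : 0 ≤ b := hT.re_inner_nonneg_left (T x)
  have key : ∀ t : ℝ, 0 ≤ 2 * t * a + t ^ 2 * b := by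
    intro t
    have h0 := hT.re_inner_nonneg_left (x + (t : ℂ) • T x)
    have hT2 : ⟪T (T x), x⟫_ℂ = ⟪T x, T x⟫_ℂ := hsymm (T x) x
    have hA : ⟪T x, T x⟫_ℂ = (a : ℂ) := by
      rw [ha, inner_self_eq_norm_sq_to_K]; norm_num
    have hexp : ⟪T (x + (t : ℂ) • T x), x + (t : ℂ) • T x⟫_ℂ
        = ⟪T x, x⟫_ℂ + (t : ℂ) * (a : ℂ)
          + (t : ℂ) * (a : ℂ) + ((t * t : ℝ) : ℂ) * ⟪T (T x), T x⟫_ℂ := by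
      rw [map_add, map_smul, inner_add_left, inner_add_right, inner_add_right,
        inner_smul_left, inner_smul_right, inner_smul_left, inner_smul_right, hT2, hA]
      simp [Complex.conj_ofReal]
      ring
    rw [hexp] at h0
    have e1 : re ((t : ℂ) * (a : ℂ)) = t * a := by simp
    have e2 : re (((t * t : ℝ) : ℂ) * ⟪T (T x), T x⟫_ℂ) = (t * t) * b := by
      rw [hb]; simp
    simp only [map_add, hx, e1, e2] at h0
    nlinarith [h0]
  have hann : 0 ≤ a := by positivity
  have haz : a = 0 := by
    rcases eq_or_lt_of_le hbnn with hb0 | hb0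
    · have := key (-1); nlinarith
    · have h2 := key (-(a / b))
      have h3 : 2 * -(a / b) * a + (-(a / b)) ^ 2 * b = -(a ^ 2 / b) := by
        field_simp; ring
      rw [h3] at h2
      have h4 : a ^ 2 / b ≤ 0 := by linarith
      have h5 : a ^ 2 ≤ 0 := by
        by_contra hc
        push_neg at hc
        exact absurd (div_pos hc hb0) (by linarith)
      nlinarith
  have : ‖T x‖ = 0 := by
    have := pow_eq_zero_iff (n := 2) (by norm_num) |>.mp haz
    exact this
  simpa using this

variable {ι : Type*} [Fintype ι]

private lemma krausMap_isPositive (K : ι → (H →L[ℂ] H)) {A : H →L[ℂ] H} (hA : A.IsPositive) :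
    (krausMap K A).IsPositive := by
  exact Finset.sum_induction _ ContinuousLinearMap.IsPositive
    (fun a b ha hb => ha.add hb) isPositive_zero (fun k _ => hA.conj_adjoint (K k))

private lemma mem_ker_krausMap_iff (K : ι → (H →L[ℂ] H)) {A : H →L[ℂ] H} (hA : A.IsPositive)
    (x : H) :
    krausMap K A x = 0 ↔ ∀ k, A ((ContinuousLinearMap.adjoint (K k)) x) = 0 := by
  constructor
  · intro hx k
    have hsum : ∑ k, re ⟪A ((ContinuousLinearMap.adjoint (K k)) x),
        (ContinuousLinearMap.adjoint (K k)) x⟫_ℂ = 0 := by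
      have : re ⟪krausMap K A x, x⟫_ℂ = 0 := by rw [hx]; simp
      rw [krausMap, ContinuousLinearMap.sum_apply, sum_inner, map_sum] at this
      rw [← this]
      refine Finset.sum_congr rfl fun k _ => ?_
      simp only [ContinuousLinearMap.coe_comp', Function.comp_apply]
      rw [ContinuousLinearMap.adjoint_inner_right (K k)]
    have hterm : ∀ k ∈ Finset.univ, (0:ℝ) ≤ re ⟪A ((ContinuousLinearMap.adjoint (K k)) x),
        (ContinuousLinearMap.adjoint (K k)) x⟫_ℂ :=
      fun k _ => hA.re_inner_nonneg_left _
    have := (Finset.sum_eq_zero_iff_of_nonneg hterm).mp hsum k (Finset.mem_univ k)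
    exact pos_apply_eq_zero hA this
  · intro h
    rw [krausMap, ContinuousLinearMap.sum_apply]
    refine Finset.sum_eq_zero fun k _ => ?_
    simp [h k]

private lemma ker_eq_orthogonal_range {T : H →L[ℂ] H} (hT : IsSelfAdjoint T) :
    LinearMap.ker (T : H →ₗ[ℂ] H) = (LinearMap.range (T : H →ₗ[ℂ] H))ᗮ := by
  have hsymm : (T : H →ₗ[ℂ] H).IsSymmetric :=
    ContinuousLinearMap.isSelfAdjoint_iff_isSymmetric.mp hT
  ext x
  simp only [LinearMap.mem_ker, Submodule.mem_orthogonal]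
  constructor
  · rintro hx u ⟨y, rfl⟩
    simpa using (hsymm y x).trans (by simp [hx])
  · intro h
    have h1 : ⟪T x, T x⟫_ℂ = 0 := by
      have := h (T (T x)) ⟨T x, rfl⟩
      simpa using (hsymm (T x) x).symm.trans this
    simpa using h1

private lemma range_eq_orthogonal_ker {T : H →L[ℂ] H} (hT : IsSelfAdjoint T) :
    LinearMap.range (T : H →ₗ[ℂ] H) = (LinearMap.ker (T : H →ₗ[ℂ] H))ᗮ := by
  rw [ker_eq_orthogonal_range hT, Submodule.orthogonal_orthogonal]

private lemma projCLM_isPositive (S : Submodule ℂ H) : (projCLM S).IsPositive := by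
  have h := (ContinuousLinearMap.isPositive_one (E := S)).conj_adjoint S.subtypeL
  rw [Submodule.adjoint_subtypeL] at h
  simpa [projCLM, ContinuousLinearMap.one_def] using h

private lemma projCLM_apply_eq_zero_iff (S : Submodule ℂ H) (x : H) :
    projCLM S x = 0 ↔ x ∈ Sᗮ := by
  rw [projCLM]
  simp only [ContinuousLinearMap.coe_comp', Function.comp_apply]
  rw [show (S.subtypeL (S.orthogonalProjectionOnto x) = 0)
      ↔ (S.orthogonalProjectionOnto x = 0) from
    ⟨fun h => Subtype.ext h, fun h => by simp [h]⟩]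
  exact Submodule.orthogonalProjectionOnto_eq_zero_iff

end Aux

theorem range_krausMap_proj_supp_eq_range_krausMap
    {H : Type*} [NormedAddCommGroup H] [InnerProductSpace ℂ H] [FiniteDimensional ℂ H]
    {ι : Type*} [Fintype ι] (K : ι → (H →L[ℂ] H))
    (ρ : H →L[ℂ] H) (hρ : ρ.IsPositive) :
    LinearMap.range (krausMap K (projCLM (LinearMap.range (ρ : H →ₗ[ℂ] H))) : H →ₗ[ℂ] H)
      = LinearMap.range (krausMap K ρ : H →ₗ[ℂ] H) := by
  set S : Submodule ℂ H := LinearMap.range (ρ : H →ₗ[ℂ] H) with hS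
  have hP : (projCLM S).IsPositive := projCLM_isPositive S
  have hkerρ : ∀ y : H, ρ y = 0 ↔ y ∈ Sᗮ := by
    intro y
    have := ker_eq_orthogonal_range hρ.isSelfAdjoint
    rw [hS, ← this]
    exact LinearMap.mem_ker
  have hker : LinearMap.ker (krausMap K (projCLM S) : H →ₗ[ℂ] H) = LinearMap.ker (krausMap K ρ : H →ₗ[ℂ] H) := by
    ext x
    simp only [LinearMap.mem_ker, ContinuousLinearMap.coe_coe]
    rw [mem_ker_krausMap_iff K hP, mem_ker_krausMap_iff K hρ]
    exact forall_congr' fun k => by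
      rw [projCLM_apply_eq_zero_iff, hkerρ]
  rw [range_eq_orthogonal_ker (krausMap_isPositive K hP).isSelfAdjoint,
    range_eq_orthogonal_ker (krausMap_isPositive K hρ).isSelfAdjoint, hker]
end
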